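/- arXiv:1609.00127 — 2 statements merged into one kernel-verified Lean document; each statement's English description precedes it below -/
import Mathlib

section
/- Let a₀, b₀, ψ₀, ρ ∈ ℝ with a₀, b₀, ψ₀ ≥ 0 and ρ > a₀² + 2b₀ + 2ψ₀/T, where T > 0. Let ψ : [0,T] → [0, +∞) be absolutely continuous with ψ(0) = ψ₀ and ψ'(t) + ρ ≤ a₀ ρ^{1/2} + b₀ for almost every t in the set {t ∈ (0,T) : ψ(t) > 0}. If ψ₀ = 0, then ψ vanishes identically on [0,T]. -/
open MeasureTheory intervalIntegral

/-- sliding-mode lemma, degenerate case.  If `ψ : [0,T] → [0,∞)` is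
absolutely continuous (written with an integrable a.e.-derivative `g`), `ψ(0) = ψ₀ = 0`,
`ρ > a₀² + 2b₀ + 2ψ₀/T`, and `g + ρ ≤ a₀ √ρ + b₀` a.e. on `{t ∈ (0,T) : ψ t > 0}`,
then `ψ` vanishes identically on `[0,T]`. -/
theorem sliding_mode_lemma_zero_case
    (T a₀ b₀ ψ₀ ρ : ℝ) (hT : 0 < T)
    (ha₀ : 0 ≤ a₀) (hb₀ : 0 ≤ b₀) (hψ₀ : 0 ≤ ψ₀)
    (hρ : a₀ ^ 2 + 2 * b₀ + 2 * ψ₀ / T < ρ)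
    (ψ g : ℝ → ℝ)
    (hnonneg : ∀ t ∈ Set.Icc 0 T, 0 ≤ ψ t)
    (hint : IntervalIntegrable g volume 0 T)
    (hAC : ∀ t ∈ Set.Icc 0 T, ψ t = ψ 0 + ∫ s in (0:ℝ)..t, g s)
    (hψ0 : ψ 0 = ψ₀)
    (hineq : ∀ᵐ t ∂(volume.restrict {t : ℝ | t ∈ Set.Ioo 0 T ∧ 0 < ψ t}),
      g t + ρ ≤ a₀ * Real.sqrt ρ + b₀)
    (hzero : ψ₀ = 0) :
    ∀ t ∈ Set.Icc 0 T, ψ t = 0 := by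
  -- key: a₀ √ρ + b₀ < ρ
  have hρ' : a₀ ^ 2 + 2 * b₀ < ρ := by
    have : 0 ≤ 2 * ψ₀ / T := by positivity
    nlinarith
  have hρpos : 0 < ρ := by nlinarith
  have hsqrt : a₀ * Real.sqrt ρ + b₀ < ρ := by
    have h1 : a₀ * Real.sqrt ρ ≤ (a₀ ^ 2 + ρ) / 2 := by
      nlinarith [sq_nonneg (a₀ - Real.sqrt ρ), Real.sq_sqrt hρpos.le]
    linarith
  have hgle : ∀ᵐ t ∂(volume.restrict {t : ℝ | t ∈ Set.Ioo 0 T ∧ 0 < ψ t}),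
      g t ≤ 0 := by
    filter_upwards [hineq] with t ht
    linarith
  -- continuity of ψ on [0,T]
  have hcontψ : ContinuousOn ψ (Set.Icc 0 T) := by
    have h1 : ContinuousOn (fun t => ψ 0 + ∫ s in (0:ℝ)..t, g s) (Set.Icc 0 T) := by
      refine continuousOn_const.add ?_
      have := intervalIntegral.continuousOn_primitive_interval
        (a := 0) (b := T) (μ := volume) (f := g) ?_
      · simpa [Set.uIcc_of_le hT.le] using this
      · rw [Set.uIcc_of_le hT.le, IntegrableOn, ← MeasureTheory.restrict_Ioc_eq_restrict_Icc]
        exact hint.1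
    exact h1.congr fun t ht => hAC t ht
  intro t₁ ht₁
  by_contra hne
  have hpos : 0 < ψ t₁ := lt_of_le_of_ne (hnonneg t₁ ht₁) (Ne.symm hne)
  -- set of zeros before t₁
  set S : Set ℝ := {s | s ∈ Set.Icc 0 t₁ ∧ ψ s = 0} with hS
  have h0S : (0:ℝ) ∈ S := ⟨⟨le_refl 0, ht₁.1⟩, by rw [hψ0, hzero]⟩
  have hSne : S.Nonempty := ⟨0, h0S⟩
  have hSbdd : BddAbove S := ⟨t₁, fun s hs => hs.1.2⟩
  have hSclosed : IsClosed S := by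
    have hsub : Set.Icc (0:ℝ) t₁ ⊆ Set.Icc 0 T := Set.Icc_subset_Icc le_rfl ht₁.2
    have : S = Set.Icc 0 t₁ ∩ ψ ⁻¹' {0} := by
      ext s; simp [hS, Set.mem_Icc]
    rw [this]
    exact ContinuousOn.preimage_isClosed_of_isClosed (hcontψ.mono hsub)
      isClosed_Icc isClosed_singleton
  set t₀ := sSup S with ht₀def
  have ht₀S : t₀ ∈ S := hSclosed.csSup_mem hSne hSbdd
  have ht₀0 : 0 ≤ t₀ := ht₀S.1.1
  have ht₀t₁ : t₀ ≤ t₁ := ht₀S.1.2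
  have ht₀lt : t₀ < t₁ := lt_of_le_of_ne ht₀t₁ (by
    intro h; rw [h] at ht₀S; exact hne ht₀S.2)
  -- on (t₀, t₁), ψ > 0
  have hsub : Set.Ioo t₀ t₁ ⊆ {t : ℝ | t ∈ Set.Ioo 0 T ∧ 0 < ψ t} := by
    intro s hs
    have hs0T : s ∈ Set.Ioo 0 T :=
      ⟨lt_of_le_of_lt ht₀0 hs.1, lt_of_lt_of_le hs.2 ht₁.2⟩
    refine ⟨hs0T, ?_⟩
    rcases lt_or_eq_of_le (hnonneg s ⟨hs0T.1.le, hs0T.2.le⟩) with h | h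
    · exact h
    · exfalso
      have : s ∈ S := ⟨⟨hs0T.1.le, hs.2.le⟩, h.symm⟩
      exact absurd (le_csSup hSbdd this) (not_le.mpr hs.1)
  -- integrability on [t₀, t₁]
  have hint' : IntervalIntegrable g volume t₀ t₁ := by
    apply hint.mono_set
    rw [Set.uIcc_of_le ht₀lt.le, Set.uIcc_of_le hT.le]
    exact Set.Icc_subset_Icc ht₀0 ht₁.2
  -- ψ t₁ = ψ t₀ + ∫ t₀..t₁ g
  have hadd : ψ t₁ = ψ t₀ + ∫ s in t₀..t₁, g s := by
    have h1 := hAC t₁ ht₁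
    have h2 := hAC t₀ ⟨ht₀0, ht₀t₁.trans ht₁.2⟩
    have h3 : (∫ s in (0:ℝ)..t₀, g s) + ∫ s in t₀..t₁, g s = ∫ s in (0:ℝ)..t₁, g s := by
      apply intervalIntegral.integral_add_adjacent_intervals
      · apply hint.mono_set
        rw [Set.uIcc_of_le ht₀0, Set.uIcc_of_le hT.le]
        exact Set.Icc_subset_Icc le_rfl (ht₀t₁.trans ht₁.2)
      · exact hint'
    rw [h1, h2, ← h3]; ring
  -- the a.e. bound on the subinterval
  have hgle' : ∀ᵐ t ∂(volume.restrict (Set.Icc t₀ t₁)), g t ≤ 0 := by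
    rw [← MeasureTheory.restrict_Ioo_eq_restrict_Icc]
    exact (ae_mono (Measure.restrict_mono hsub le_rfl)) hgle
  have hintle : (∫ s in t₀..t₁, g s) ≤ ∫ s in t₀..t₁, (0:ℝ) := by
    apply intervalIntegral.integral_mono_ae_restrict ht₀lt.le hint'
      intervalIntegrable_const
    exact hgle'
  rw [intervalIntegral.integral_const, smul_zero] at hintle
  have : ψ t₁ ≤ 0 := by rw [hadd, ht₀S.2]; linarith
  linarith
end

section
/- Let a₀, b₀, ψ₀, ρ ∈ ℝ with a₀, b₀ ≥ 0, ψ₀ > 0, T > 0, and ρ > a₀² + 2b₀ + 2ψ₀/T. Let ψ : [0,T] → [0, +∞) be absolutely continuous with ψ(0) = ψ₀ and ψ'(t) + ρ ≤ a₀ ρ^{1/2} + b₀ for a.e. t ∈ {t ∈ (0,T) : ψ(t) > 0}. Then there exists T* ∈ (0,T) with T* ≤ 2ψ₀/(ρ − a₀² − 2b₀) such that ψ is strictly decreasing on (0, T*) and ψ vanishes on [T*, T]. -/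
open MeasureTheory intervalIntegral Set

/-!
Let `c = ρ - a₀ √ρ - b₀`; since `a₀ √ρ ≤ (a₀² + ρ) / 2`, we have
`c ≥ (ρ - a₀² - 2 b₀) / 2 > ψ₀ / T`.
Integrating `ψ' ≤ -c` over any interval on which `ψ > 0` shows that `ψ` drops by at least `c`
per unit time there. Hence `ψ` must vanish before time `ψ₀ / c < T`; its first zero is `T*`,
and `ψ` is strictly decreasing before it. After `T*` it cannot become positive again: from the
last zero `s` before a time `t` with `ψ t > 0`, the drop gives `ψ t ≤ ψ s - c (t - s) ≤ 0`.
-/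

def DecaysWhilePositive (ψ : ℝ → ℝ) (c a b : ℝ) : Prop :=
  ∀ s t, a ≤ s → s ≤ t → t ≤ b → (∀ u ∈ Ioo s t, 0 < ψ u) → ψ t + c * (t - s) ≤ ψ s

theorem intervalIntegral_le_of_ae_le_const {g : ℝ → ℝ} {s t C : ℝ} (hst : s ≤ t)
    (hg : IntervalIntegrable g volume s t) (hC : ∀ᵐ u ∂volume.restrict (Ioo s t), g u ≤ C) :
    ∫ u in s..t, g u ≤ C * (t - s) := by
  rw [Measure.restrict_congr_set Ioo_ae_eq_Icc] at hC
  calc ∫ u in s..t, g u ≤ ∫ _ in s..t, C :=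
        integral_mono_ae_restrict hst hg intervalIntegrable_const hC
    _ = C * (t - s) := by rw [intervalIntegral.integral_const, smul_eq_mul, mul_comm]

section Primitive

variable {ψ g : ℝ → ℝ} {a b : ℝ}

theorem IntervalIntegrable.mono_of_le {μ : Measure ℝ} (hg : IntervalIntegrable g μ a b)
    {p q : ℝ} (hp : a ≤ p) (hpq : p ≤ q) (hq : q ≤ b) : IntervalIntegrable g μ p q :=
  hg.mono_set (by
    rw [uIcc_of_le hpq, uIcc_of_le (hp.trans hpq |>.trans hq)]
    exact Icc_subset_Icc hp hq)

theorem continuousOn_of_forall_eq_add_integral (hg : IntervalIntegrable g volume a b)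
    (hψ : ∀ t ∈ Icc a b, ψ t = ψ a + ∫ u in a..t, g u) : ContinuousOn ψ (Icc a b) :=
  (continuousOn_const.add ((continuousOn_primitive_interval' hg left_mem_uIcc).mono
    Icc_subset_uIcc)).congr hψ

theorem eq_add_integral_of_forall_eq_add_integral (hg : IntervalIntegrable g volume a b)
    (hψ : ∀ t ∈ Icc a b, ψ t = ψ a + ∫ u in a..t, g u) {s t : ℝ} (hs : a ≤ s) (hst : s ≤ t)
    (ht : t ≤ b) : ψ t = ψ s + ∫ u in s..t, g u := by
  have := integral_add_adjacent_intervals (hg.mono_of_le le_rfl hs (hst.trans ht))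
    (hg.mono_of_le hs hst ht)
  rw [hψ t ⟨hs.trans hst, ht⟩, hψ s ⟨hs, hst.trans ht⟩]
  linarith

theorem decaysWhilePositive_of_forall_eq_add_integral (hg : IntervalIntegrable g volume a b)
    (hψ : ∀ t ∈ Icc a b, ψ t = ψ a + ∫ u in a..t, g u) {c : ℝ}
    (hdecay : ∀ᵐ t ∂volume.restrict {t | t ∈ Ioo a b ∧ 0 < ψ t}, g t ≤ -c) :
    DecaysWhilePositive ψ c a b := by
  intro s t hs hst ht hpos
  have hsub : Ioo s t ⊆ {t | t ∈ Ioo a b ∧ 0 < ψ t} := fun u hu =>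
    ⟨⟨hs.trans_lt hu.1, hu.2.trans_le ht⟩, hpos u hu⟩
  have hint := intervalIntegral_le_of_ae_le_const hst (hg.mono_of_le hs hst ht)
    (ae_mono (Measure.restrict_mono hsub le_rfl) hdecay)
  linarith [eq_add_integral_of_forall_eq_add_integral hg hψ hs hst ht]

end Primitive

section Zeros

variable {ψ : ℝ → ℝ} {a b : ℝ}

theorem ContinuousOn.exists_first_zero (hψ : ContinuousOn ψ (Icc a b)) {z : ℝ}
    (hz : z ∈ Icc a b) (hψz : ψ z = 0) :
    ∃ s ∈ Icc a z, ψ s = 0 ∧ ∀ u ∈ Ico a s, ψ u ≠ 0 := by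
  set S := {u | u ∈ Icc a z ∧ ψ u = 0}
  have hS : IsClosed S := ((hψ.mono (Icc_subset_Icc_right hz.2)).preimage_isClosed_of_isClosed
    isClosed_Icc isClosed_singleton)
  have hbdd : BddBelow S := ⟨a, fun u hu => hu.1.1⟩
  have hmem : sInf S ∈ S := hS.csInf_mem ⟨z, ⟨hz.1, le_rfl⟩, hψz⟩ hbdd
  refine ⟨sInf S, hmem.1, hmem.2, fun u hu hψu => ?_⟩
  have := csInf_le hbdd ⟨⟨hu.1, hu.2.le.trans hmem.1.2⟩, hψu⟩
  exact hu.2.not_ge this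

theorem ContinuousOn.exists_last_zero (hψ : ContinuousOn ψ (Icc a b)) {z : ℝ}
    (hz : z ∈ Icc a b) (hψz : ψ z = 0) :
    ∃ s ∈ Icc z b, ψ s = 0 ∧ ∀ u ∈ Ioc s b, ψ u ≠ 0 := by
  set S := {u | u ∈ Icc z b ∧ ψ u = 0}
  have hS : IsClosed S := ((hψ.mono (Icc_subset_Icc_left hz.1)).preimage_isClosed_of_isClosed
    isClosed_Icc isClosed_singleton)
  have hbdd : BddAbove S := ⟨b, fun u hu => hu.1.2⟩
  have hmem : sSup S ∈ S := hS.csSup_mem ⟨z, ⟨le_rfl, hz.2⟩, hψz⟩ hbdd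
  refine ⟨sSup S, hmem.1, hmem.2, fun u hu hψu => ?_⟩
  have := le_csSup hbdd ⟨⟨hmem.1.1.trans hu.1.le, hu.2⟩, hψu⟩
  exact hu.1.not_ge this

end Zeros

namespace DecaysWhilePositive

variable {ψ : ℝ → ℝ} {a b c : ℝ}

theorem exists_zero (h : DecaysWhilePositive ψ c a b) (hc : 0 < c)
    (hnonneg : ∀ t ∈ Icc a b, 0 ≤ ψ t) (hab : a ≤ b) (hb : a + ψ a / c ≤ b) :
    ∃ z ∈ Icc a (a + ψ a / c), ψ z = 0 := by
  have ha : 0 ≤ ψ a / c := div_nonneg (hnonneg a ⟨le_rfl, hab⟩) hc.le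
  by_contra! hne
  have hpos : ∀ u ∈ Icc a (a + ψ a / c), 0 < ψ u := fun u hu =>
    (hnonneg u ⟨hu.1, hu.2.trans hb⟩).lt_of_ne' (hne u hu)
  have hdrop := h a (a + ψ a / c) le_rfl (by linarith) hb fun u hu =>
    hpos u (Ioo_subset_Icc_self hu)
  have hend := hpos (a + ψ a / c) ⟨by linarith, le_rfl⟩
  rw [add_sub_cancel_left, mul_div_cancel₀ _ hc.ne'] at hdrop
  linarith

theorem strictAntiOn (h : DecaysWhilePositive ψ c a b) (hc : 0 < c) {p q : ℝ} (hp : a ≤ p)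
    (hq : q ≤ b) (hpos : ∀ u ∈ Ioo p q, 0 < ψ u) : StrictAntiOn ψ (Ioo p q) := by
  intro s hs t ht hst
  have hdrop := h s t (hp.trans hs.1.le) hst.le (ht.2.le.trans hq) fun u hu =>
    hpos u ⟨hs.1.trans hu.1, hu.2.trans ht.2⟩
  nlinarith

theorem eq_zero_of_eq_zero (h : DecaysWhilePositive ψ c a b) (hc : 0 ≤ c)
    (hcont : ContinuousOn ψ (Icc a b)) (hnonneg : ∀ t ∈ Icc a b, 0 ≤ ψ t) {z : ℝ}
    (hz : z ∈ Icc a b) (hψz : ψ z = 0) : ∀ t ∈ Icc z b, ψ t = 0 := by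
  intro t ht
  by_contra hne
  obtain ⟨s, hs, hψs, hlast⟩ :=
    (hcont.mono (Icc_subset_Icc_right ht.2)).exists_last_zero ⟨hz.1, ht.1⟩ hψz
  have hpos : ∀ u ∈ Ioc s t, 0 < ψ u := fun u hu =>
    (hnonneg u ⟨hz.1.trans (hs.1.trans hu.1.le), hu.2.trans ht.2⟩).lt_of_ne' (hlast u hu)
  have hdrop := h s t (hz.1.trans hs.1) hs.2 ht.2 fun u hu => hpos u (Ioo_subset_Ioc_self hu)
  have hst : s < t := hs.2.lt_of_ne fun hst => hne (hst ▸ hψs)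
  nlinarith [hpos t ⟨hst, le_rfl⟩]

theorem exists_extinction_time (h : DecaysWhilePositive ψ c a b) (hc : 0 < c)
    (hcont : ContinuousOn ψ (Icc a b)) (hnonneg : ∀ t ∈ Icc a b, 0 ≤ ψ t) (ha : 0 < ψ a)
    (hb : a + ψ a / c < b) :
    ∃ τ ∈ Ioo a b, τ ≤ a + ψ a / c ∧ StrictAntiOn ψ (Ioo a τ) ∧ ∀ t ∈ Icc τ b, ψ t = 0 := by
  have hab : a ≤ b := by linarith [div_pos ha hc]
  obtain ⟨z, hz, hψz⟩ := h.exists_zero hc hnonneg hab hb.le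
  obtain ⟨τ, hτ, hψτ, hfirst⟩ := hcont.exists_first_zero ⟨hz.1, hz.2.trans hb.le⟩ hψz
  have haτ : a < τ := hτ.1.lt_of_ne fun haτ => ha.ne' (haτ ▸ hψτ)
  have hτb : τ < b := (hτ.2.trans hz.2).trans_lt hb
  have hpos : ∀ u ∈ Ioo a τ, 0 < ψ u := fun u hu =>
    (hnonneg u ⟨hu.1.le, hu.2.le.trans hτb.le⟩).lt_of_ne' (hfirst u ⟨hu.1.le, hu.2⟩)
  exact ⟨τ, ⟨haτ, hτb⟩, hτ.2.trans hz.2, h.strictAntiOn hc le_rfl hτb.le hpos,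
    h.eq_zero_of_eq_zero hc.le hcont hnonneg ⟨hτ.1, hτb.le⟩ hψτ⟩

end DecaysWhilePositive

theorem half_sub_sq_sub_two_mul_le_sub_mul_sqrt (a₀ b₀ : ℝ) {ρ : ℝ} (hρ : 0 ≤ ρ) :
    (ρ - a₀ ^ 2 - 2 * b₀) / 2 ≤ ρ - (a₀ * Real.sqrt ρ + b₀) := by
  nlinarith [sq_nonneg (a₀ - Real.sqrt ρ), Real.sq_sqrt hρ]

theorem sliding_mode_lemma_positive_case_general
    (T a₀ b₀ ψ₀ ρ : ℝ) (hT : 0 < T)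
    (hb₀ : 0 ≤ b₀) (hψ₀ : 0 < ψ₀)
    (hρ : a₀ ^ 2 + 2 * b₀ + 2 * ψ₀ / T < ρ)
    (ψ g : ℝ → ℝ)
    (hnonneg : ∀ t ∈ Set.Icc 0 T, 0 ≤ ψ t)
    (hint : IntervalIntegrable g volume 0 T)
    (hAC : ∀ t ∈ Set.Icc 0 T, ψ t = ψ 0 + ∫ s in (0:ℝ)..t, g s)
    (hψ0 : ψ 0 = ψ₀)
    (hineq : ∀ᵐ t ∂(volume.restrict {t : ℝ | t ∈ Set.Ioo 0 T ∧ 0 < ψ t}),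
      g t + ρ ≤ a₀ * Real.sqrt ρ + b₀) :
    ∃ Tstar ∈ Set.Ioo 0 T, Tstar ≤ 2 * ψ₀ / (ρ - a₀ ^ 2 - 2 * b₀) ∧
      StrictAntiOn ψ (Set.Ioo 0 Tstar) ∧ ∀ t ∈ Set.Icc Tstar T, ψ t = 0 := by
  set c := ρ - (a₀ * Real.sqrt ρ + b₀)
  have hψ₀T : 0 < 2 * ψ₀ / T := by positivity
  have hΔ : 2 * ψ₀ / T < ρ - a₀ ^ 2 - 2 * b₀ := by linarith
  have hΔc : (ρ - a₀ ^ 2 - 2 * b₀) / 2 ≤ c :=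
    half_sub_sq_sub_two_mul_le_sub_mul_sqrt a₀ b₀ (by nlinarith)
  have hc : 0 < c := by linarith
  have hψ₀c : ψ₀ / c ≤ 2 * ψ₀ / (ρ - a₀ ^ 2 - 2 * b₀) := by
    rw [div_le_div_iff₀ hc (by linarith)]
    nlinarith
  have hψ₀cT : 2 * ψ₀ / (ρ - a₀ ^ 2 - 2 * b₀) < T := by
    rw [div_lt_iff₀ (by linarith)]
    linarith [(div_lt_iff₀ hT).1 hΔ]
  have hdecay : DecaysWhilePositive ψ c 0 T :=
    decaysWhilePositive_of_forall_eq_add_integral hint hAC (by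
      filter_upwards [hineq] with t ht
      linarith)
  obtain ⟨τ, hτ, hτψ, hanti, hzero⟩ := hdecay.exists_extinction_time hc
    (continuousOn_of_forall_eq_add_integral hint hAC) hnonneg (hψ0 ▸ hψ₀) (by
      rw [hψ0, zero_add]; linarith)
  exact ⟨τ, hτ, by rw [hψ0, zero_add] at hτψ; linarith, hanti, hzero⟩

/-- sliding-mode lemma, positive case.  If `ψ : [0,T] → [0,∞)` is
absolutely continuous (written with an integrable a.e.-derivative `g`), `ψ(0) = ψ₀ > 0`,
`ρ > a₀² + 2b₀ + 2ψ₀/T`, and `g + ρ ≤ a₀ √ρ + b₀` a.e. on `{t ∈ (0,T) : ψ t > 0}`,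
then there exists `T* ∈ (0,T)` with `T* ≤ 2ψ₀/(ρ − a₀² − 2b₀)` such that `ψ` is
strictly decreasing on `(0, T*)` and vanishes on `[T*, T]`. -/
theorem sliding_mode_lemma_positive_case
    (T a₀ b₀ ψ₀ ρ : ℝ) (hT : 0 < T)
    (ha₀ : 0 ≤ a₀) (hb₀ : 0 ≤ b₀) (hψ₀ : 0 < ψ₀)
    (hρ : a₀ ^ 2 + 2 * b₀ + 2 * ψ₀ / T < ρ)
    (ψ g : ℝ → ℝ)
    (hnonneg : ∀ t ∈ Set.Icc 0 T, 0 ≤ ψ t)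
    (hint : IntervalIntegrable g volume 0 T)
    (hAC : ∀ t ∈ Set.Icc 0 T, ψ t = ψ 0 + ∫ s in (0:ℝ)..t, g s)
    (hψ0 : ψ 0 = ψ₀)
    (hineq : ∀ᵐ t ∂(volume.restrict {t : ℝ | t ∈ Set.Ioo 0 T ∧ 0 < ψ t}),
      g t + ρ ≤ a₀ * Real.sqrt ρ + b₀) :
    ∃ Tstar ∈ Set.Ioo 0 T, Tstar ≤ 2 * ψ₀ / (ρ - a₀ ^ 2 - 2 * b₀) ∧
      StrictAntiOn ψ (Set.Ioo 0 Tstar) ∧ ∀ t ∈ Set.Icc Tstar T, ψ t = 0 :=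
  sliding_mode_lemma_positive_case_general T a₀ b₀ ψ₀ ρ hT hb₀ hψ₀ hρ ψ g hnonneg hint hAC hψ0 hineq
end
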